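/- arXiv:1011.1855 — 3 statements merged into one kernel-verified Lean document; each statement's English description precedes it below -/
import Mathlib

section
/- Let p be a prime and n ≥ 2 a natural number. Consider (ℤ/pℤ)^n with the action of the symmetric group S_n permuting the coordinates. Then the only S_n-invariant subgroups W of (ℤ/pℤ)^n are: the trivial subgroup, the whole group, the diagonal subgroup E = {(a,a,...,a) : a ∈ ℤ/pℤ}, and the kernel F = {(a_1,...,a_n) : a_1 + ... + a_n = 0} of the coordinate-sum map. -/
lemma mySmulMemAux {p n : ℕ} [NeZero p] (W : AddSubgroup (Fin n → ZMod p))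
    (c : ZMod p) {w : Fin n → ZMod p} (hw : w ∈ W) : c • w ∈ W := by
  have h : c • w = c.val • w := by
    funext i
    simp [Pi.smul_apply, nsmul_eq_mul, ZMod.natCast_val, ZMod.cast_id]
  rw [h]
  exact nsmul_mem hw _

/-- The only `S_n`-invariant subgroups of `(ℤ/pℤ)^n` are the trivial subgroup,
the whole group, the diagonal subgroup and the kernel of the coordinate-sum map. -/
theorem snInvariant_subgroups_of_zmod_pow
    (p n : ℕ) (hp : p.Prime) (hn : 2 ≤ n)
    (W : AddSubgroup (Fin n → ZMod p))
    (hW : ∀ σ : Equiv.Perm (Fin n), ∀ v ∈ W, (fun i => v (σ i)) ∈ W) :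
    W = ⊥ ∨ W = ⊤ ∨
      (∀ v : Fin n → ZMod p, v ∈ W ↔ ∃ a : ZMod p, v = fun _ => a) ∨
      (∀ v : Fin n → ZMod p, v ∈ W ↔ ∑ i, v i = 0) := by
  haveI : Fact p.Prime := ⟨hp⟩
  haveI : NeZero p := ⟨hp.ne_zero⟩
  have hsmul : ∀ (c : ZMod p) (w : Fin n → ZMod p), w ∈ W → c • w ∈ W :=
    fun c w hw => mySmulMemAux W c hw
  by_cases hconst : ∀ v ∈ W, ∀ i j : Fin n, v i = v j
  · by_cases hbot : ∀ v ∈ W, v = 0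
    · left
      exact (AddSubgroup.eq_bot_iff_forall _).mpr hbot
    · right; right; left
      push_neg at hbot
      obtain ⟨w, hwW, hw0⟩ := hbot
      have i0 : Fin n := ⟨0, by omega⟩
      have hwne : w i0 ≠ 0 := by
        intro h
        apply hw0
        funext j
        rw [hconst w hwW j i0, h]
        rfl
      intro v
      constructor
      · intro hv
        exact ⟨v i0, funext fun j => hconst v hv j i0⟩
      · rintro ⟨a, rfl⟩
        have hmem := hsmul (a * (w i0)⁻¹) w hwW
        have heq : (a * (w i0)⁻¹) • w = fun _ => a := by
          funext j
          have hj : w j = w i0 := hconst w hwW j i0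
          simp only [Pi.smul_apply, smul_eq_mul, hj, mul_assoc]
          rw [inv_mul_cancel₀ hwne, mul_one]
        rwa [heq] at hmem
  · push_neg at hconst
    obtain ⟨w, hwW, i, j, hij⟩ := hconst
    have hne : i ≠ j := fun h => hij (by rw [h])
    -- e_i - e_j ∈ W
    have hdiff : (Pi.single i (1:ZMod p) - Pi.single j 1) ∈ W := by
      have hv' := hW (Equiv.swap i j) w hwW
      have hd : w - (fun t => w (Equiv.swap i j t)) ∈ W := sub_mem hwW hv'
      have hc : w i - w j ≠ 0 := sub_ne_zero.mpr hij
      have hmem := hsmul (w i - w j)⁻¹ _ hd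
      have heq : (w i - w j)⁻¹ • (w - (fun t => w (Equiv.swap i j t)))
          = Pi.single i (1:ZMod p) - Pi.single j 1 := by
        funext t
        simp only [Pi.smul_apply, Pi.sub_apply, smul_eq_mul, Pi.single_apply]
        rcases eq_or_ne t i with rfl | hti
        · rw [Equiv.swap_apply_left, if_pos rfl, if_neg hne, inv_mul_cancel₀ hc,
            sub_zero]
        · rcases eq_or_ne t j with rfl | htj
          · rw [Equiv.swap_apply_right, if_neg hti, if_pos rfl, zero_sub,
              show w t - w i = -(w i - w t) from by ring, mul_neg,
              inv_mul_cancel₀ hc]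
          · rw [Equiv.swap_apply_of_ne_of_ne hti htj, if_neg hti, if_neg htj,
              sub_self, mul_zero, sub_self]
      rwa [heq] at hmem
    -- all pairs
    have hall : ∀ k l : Fin n, (Pi.single k (1:ZMod p) - Pi.single l 1) ∈ W := by
      intro k l
      by_cases hkl : k = l
      · subst hkl
        rw [sub_self]
        exact zero_mem W
      · set τ := Equiv.swap k i with hτ
        have hτl : τ l ≠ i := by
          intro h
          have : l = k := by
            have := τ.injective (h.trans (Equiv.swap_apply_left k i).symm)
            exact this
          exact hkl this.symm
        set σ := (Equiv.swap (τ l) j) * τ with hσ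
        have hσk : σ k = i := by
          simp only [hσ, Equiv.Perm.mul_apply, hτ, Equiv.swap_apply_left]
          exact Equiv.swap_apply_of_ne_of_ne (Ne.symm hτl) hne
        have hσl : σ l = j := by
          simp only [hσ, Equiv.Perm.mul_apply]
          exact Equiv.swap_apply_left _ _
        have hmem := hW σ _ hdiff
        have heq : (fun t => (Pi.single i (1:ZMod p) - Pi.single j 1 : Fin n → ZMod p) (σ t))
            = Pi.single k (1:ZMod p) - Pi.single l 1 := by
          funext t
          simp only [Pi.sub_apply, Pi.single_apply]
          have h1 : (σ t = i) ↔ (t = k) := by rw [← hσk, σ.injective.eq_iff]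
          have h2 : (σ t = j) ↔ (t = l) := by rw [← hσl, σ.injective.eq_iff]
          simp [h1, h2]
        rwa [heq] at hmem
    -- the sum-zero kernel is contained in W
    have hF : ∀ v : Fin n → ZMod p, ∑ t, v t = 0 → v ∈ W := by
      intro v hsum
      have hv : v = ∑ t, v t • (Pi.single t (1:ZMod p) - Pi.single i 1) := by
        funext s
        rw [Finset.sum_apply]
        simp only [Pi.smul_apply, Pi.sub_apply, Pi.single_apply, smul_eq_mul, mul_sub]
        rw [Finset.sum_sub_distrib]
        simp only [mul_ite, mul_one, mul_zero]
        by_cases hsi : s = i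
        · simp [hsi, Finset.sum_ite_eq, hsum]
        · simp [hsi, Finset.sum_ite_eq]
      rw [hv]
      exact AddSubgroup.sum_mem W fun t _ => hsmul _ _ (hall t i)
    by_cases htop : ∀ v ∈ W, ∑ t, v t = 0
    · right; right; right
      intro v
      exact ⟨htop v, hF v⟩
    · right; left
      push_neg at htop
      obtain ⟨u, huW, hus⟩ := htop
      rw [AddSubgroup.eq_top_iff']
      intro v
      set c := (∑ t, v t) * (∑ t, u t)⁻¹ with hc
      have h1 : v - c • u ∈ W := by
        apply hF
        have : ∑ t, (v - c • u) t = (∑ t, v t) - c * ∑ t, u t := by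
          simp [Finset.sum_sub_distrib, ← Finset.mul_sum]
        rw [this, hc, mul_assoc, inv_mul_cancel₀ hus, mul_one, sub_self]
      have h2 : c • u ∈ W := hsmul c u huW
      have := add_mem h1 h2
      rwa [sub_add_cancel] at this
end

section
/- Let n ≥ 2, and let ℤ^n carry the standard action of S_n permuting the basis elements e_1,...,e_n. Let V be a finite abelian group equipped with an S_n-action and let φ : ℤ^n → V be an S_n-equivariant surjective homomorphism. Then either the restriction of φ to ℤ^{n-1} × {0} (the span of e_1,...,e_{n-1}) is surjective, or V has order at least 2^n and cannot be generated by fewer than n elements. -/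
/-!
Let `H` be the image of `ℤ^{n-1} × {0}`; it generates `V` together with `φ e_n`. If `H ≠ V`,
the cyclic quotient `V ⧸ H` maps onto some `ZMod p` sending `φ e_n` to `1`, which gives
`χ : V → ZMod p` with `χ (φ x) = x_n`. By equivariance, `v ↦ (χ ((i n) • v))_i` then sends `φ x`
to `x mod p`, so `V` surjects onto `(ZMod p)^n`: hence `|V| ≥ p^n ≥ 2^n`, and a generating set
of `V` maps to a spanning set of `(ZMod p)^n`.
-/

open AddSubgroup Function

theorem exists_prime_addMonoidHom_zmod_apply_eq_one {Q : Type*} [AddGroup Q] {q : Q}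
    (hq : ∀ x, x ∈ zmultiples q) (hq0 : q ≠ 0) :
    ∃ p, p.Prime ∧ ∃ f : Q →+ ZMod p, f q = 1 := by
  -- For infinite `Q`, `Nat.card Q = 0` and `ZMod 0 = ℤ`, so no finiteness is needed.
  have hcard : Nat.card Q ≠ 1 := fun h =>
    hq0 ((Nat.card_eq_one_iff_unique.mp h).1.elim q 0)
  let e := zmodAddEquivOfGenerator hq rfl
  refine ⟨(Nat.card Q).minFac, Nat.minFac_prime hcard,
    (ZMod.castHom (Nat.minFac_dvd _) _).toAddMonoidHom.comp e.symm.toAddMonoidHom, ?_⟩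
  change ZMod.castHom (Nat.minFac_dvd _) _ (e.symm q) = 1
  rw [zmodAddEquivOfGenerator_symm_apply_generator, map_one]

theorem exists_prime_addMonoidHom_zmod_of_sup_zmultiples_eq_top {V : Type*} [AddCommGroup V]
    {H : AddSubgroup V} {q : V} (hqH : q ∉ H) (htop : H ⊔ zmultiples q = ⊤) :
    ∃ p, p.Prime ∧ ∃ χ : V →+ ZMod p, H ≤ χ.ker ∧ χ q = 1 := by
  have hgen : ∀ x : V ⧸ H, x ∈ zmultiples (q : V ⧸ H) := by
    intro x
    induction x using QuotientAddGroup.induction_on with | H y => ?_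
    obtain ⟨h, hh, _, ⟨k, rfl⟩, rfl⟩ := mem_sup.mp (htop ▸ mem_top y)
    exact ⟨k, by simp [(QuotientAddGroup.eq_zero_iff h).mpr hh]⟩
  have hq0 : (q : V ⧸ H) ≠ 0 := by rwa [Ne, QuotientAddGroup.eq_zero_iff]
  obtain ⟨p, hp, f, hf⟩ := exists_prime_addMonoidHom_zmod_apply_eq_one hgen hq0
  refine ⟨p, hp, f.comp (QuotientAddGroup.mk' H), fun h hh => ?_, hf⟩
  simp [(QuotientAddGroup.eq_zero_iff h).mpr hh]

variable {ι : Type*} [DecidableEq ι]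

theorem AddMonoidHom.apply_eq_zsmul_single_of_ker_eval_le {A : Type*} [AddCommGroup A]
    (ψ : (ι → ℤ) →+ A) {a : ι} (hψ : (Pi.evalAddMonoidHom (fun _ => ℤ) a).ker ≤ ψ.ker)
    (x : ι → ℤ) : ψ x = x a • ψ (Pi.single a 1) := by
  have hx : x - x a • Pi.single a 1 ∈ (Pi.evalAddMonoidHom (fun _ => ℤ) a).ker := by
    simp
  rw [← map_zsmul, ← sub_eq_zero, ← map_sub]
  exact hψ hx

theorem ker_evalAddMonoidHom_sup_zmultiples_single (a : ι) :
    (Pi.evalAddMonoidHom (fun _ : ι => ℤ) a).ker ⊔ zmultiples (Pi.single a 1) = ⊤ := by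
  exact eq_top_iff.mpr fun x _ => mem_sup.mpr
    ⟨x - x a • Pi.single a 1, by simp, x a • Pi.single a 1, zsmul_mem_zmultiples _ _, by simp⟩

theorem exists_prime_surjective_addMonoidHom_pi_zmod {V : Type*} [AddCommGroup V]
    [DistribMulAction (Equiv.Perm ι) V] (φ : (ι → ℤ) →+ V) (hsurj : Surjective φ)
    (hequiv : ∀ (σ : Equiv.Perm ι) (x : ι → ℤ), φ (fun i => x (σ⁻¹ i)) = σ • φ x)
    {a : ι} (hS : (Pi.evalAddMonoidHom (fun _ : ι => ℤ) a).ker.map φ ≠ ⊤) :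
    ∃ p, p.Prime ∧ ∃ F : V →+ (ι → ZMod p), Surjective F := by
  set K := (Pi.evalAddMonoidHom (fun _ : ι => ℤ) a).ker
  have htop : K.map φ ⊔ zmultiples (φ (Pi.single a 1)) = ⊤ := by
    rw [← φ.map_zmultiples, ← AddSubgroup.map_sup, ker_evalAddMonoidHom_sup_zmultiples_single,
      map_top_of_surjective φ hsurj]
  have hmem : φ (Pi.single a 1) ∉ K.map φ := fun h =>
    hS (by rwa [sup_eq_left.mpr (zmultiples_le_of_mem h)] at htop)
  obtain ⟨p, hp, χ, hχK, hχ⟩ := exists_prime_addMonoidHom_zmod_of_sup_zmultiples_eq_top hmem htop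
  have hχφ (x : ι → ℤ) : χ (φ x) = x a := by
    rw [← χ.comp_apply φ, (χ.comp φ).apply_eq_zsmul_single_of_ker_eval_le
      (fun y hy => hχK ⟨y, hy, rfl⟩) x]
    simp [hχ]
  refine ⟨p, hp, AddMonoidHom.pi fun i => χ.comp (DistribSMul.toAddMonoidHom V (Equiv.swap i a)),
    fun y => ?_⟩
  obtain ⟨x, rfl⟩ := ZMod.intCast_surjective.comp_left y
  refine ⟨φ x, funext fun i => ?_⟩
  simp [← hequiv, hχφ]

theorem finrank_le_card_of_surjective_of_closure_eq_top {R M V : Type*} [Ring R]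
    [StrongRankCondition R] [AddCommGroup M] [Module R M] [AddCommGroup V] {F : V →+ M}
    (hF : Surjective F) {s : Finset V} (hs : closure (s : Set V) = ⊤) :
    Module.finrank R M ≤ s.card := by
  classical
  have hspan : Submodule.span R ((s.image F : Finset M) : Set M) = ⊤ := by
    refine eq_top_iff.mpr fun x _ => ?_
    have hx : x ∈ closure (F '' s) := by
      rw [← F.map_closure, hs, map_top_of_surjective F hF]; trivial
    refine (closure_le (Submodule.span R _).toAddSubgroup).mpr ?_ hx
    simp [Submodule.subset_span]
  calc Module.finrank R M = Set.finrank R (s.image F : Set M) := by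
        rw [Set.finrank, hspan, finrank_top]
    _ ≤ (s.image F).card := finrank_span_finset_le_card _
    _ ≤ s.card := Finset.card_image_le

/-- If `φ : ℤ^n → V` is an `S_n`-equivariant epimorphism onto a finite abelian
group, then either the restriction of `φ` to `ℤ^{n-1} × {0}` is surjective, or
`V` has order at least `2^n` and cannot be generated by fewer than `n` elements. -/
theorem equivariant_epi_dichotomy
    (n : ℕ) (hn : 2 ≤ n) (V : Type) [AddCommGroup V] [Fintype V]
    [DistribMulAction (Equiv.Perm (Fin n)) V]
    (φ : (Fin n → ℤ) →+ V) (hsurj : Function.Surjective φ)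
    (hequiv : ∀ (σ : Equiv.Perm (Fin n)) (x : Fin n → ℤ),
      φ (fun i => x (σ⁻¹ i)) = σ • φ x) :
    (∀ v : V, ∃ x : Fin n → ℤ,
        x ⟨n - 1, by omega⟩ = 0 ∧ φ x = v) ∨
      (2 ^ n ≤ Fintype.card V ∧
        ∀ s : Finset V, AddSubgroup.closure (s : Set V) = ⊤ → n ≤ s.card) := by
  by_cases hS : (Pi.evalAddMonoidHom (fun _ : Fin n => ℤ) ⟨n - 1, by omega⟩).ker.map φ = ⊤
  · refine .inl fun v => ?_
    obtain ⟨x, hx, rfl⟩ := hS ▸ mem_top v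
    exact ⟨x, hx, rfl⟩
  · obtain ⟨p, hp, F, hF⟩ := exists_prime_surjective_addMonoidHom_pi_zmod φ hsurj hequiv hS
    have : Fact p.Prime := ⟨hp⟩
    refine .inr ⟨?_, fun s hs => ?_⟩
    · calc 2 ^ n ≤ p ^ n := Nat.pow_le_pow_left hp.two_le n
        _ = Fintype.card (Fin n → ZMod p) := by simp
        _ ≤ Fintype.card V := Fintype.card_le_of_surjective F hF
    · simpa using finrank_le_card_of_surjective_of_closure_eq_top (R := ZMod p) hF hs
end

section
/- Let W be an S_n-invariant subgroup of (ℤ/pℤ)^n, where p is prime and n ≥ 2. If W contains a vector v with two distinct entries, then W contains the subgroup F = {(a_1,...,a_n) : a_1 + ... + a_n = 0}. -/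
/-- An `S_n`-invariant subgroup of `(ℤ/pℤ)^n` containing a vector with two
distinct entries contains the kernel of the coordinate-sum homomorphism. -/
theorem snInvariant_subgroup_contains_sum_zero
    (p n : ℕ) (hp : p.Prime) (hn : 2 ≤ n)
    (W : AddSubgroup (Fin n → ZMod p))
    (hW : ∀ σ : Equiv.Perm (Fin n), ∀ v ∈ W, (fun i => v (σ i)) ∈ W)
    (v : Fin n → ZMod p) (hv : v ∈ W)
    (i j : Fin n) (hij : v i ≠ v j) :
    ∀ x : Fin n → ZMod p, (∑ k, x k = 0) → x ∈ W := by
  haveI : Fact p.Prime := ⟨hp⟩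
  -- W is closed under scalar multiplication by ZMod p
  have hsmul : ∀ (z : ZMod p) (w : Fin n → ZMod p), w ∈ W → z • w ∈ W := by
    intro z w hw
    have : z • w = z.val • w := by
      ext m
      simp [nsmul_eq_mul, ZMod.natCast_val]
    rw [this]
    exact AddSubgroup.nsmul_mem W hw z.val
  have hij' : i ≠ j := fun h => hij (by rw [h])
  -- the difference vector
  have hw : (v - fun m => v (Equiv.swap i j m)) ∈ W :=
    W.sub_mem hv (hW _ v hv)
  have hrep : (v - fun m => v (Equiv.swap i j m))
      = (v i - v j) • (Pi.single i (1 : ZMod p) - Pi.single j 1) := by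
    ext m
    by_cases hmi : m = i
    · subst hmi
      simp [Equiv.swap_apply_left, Pi.single_apply, hij']
    · by_cases hmj : m = j
      · subst hmj
        simp [Equiv.swap_apply_right, Pi.single_apply, Ne.symm hij']
      · simp [Equiv.swap_apply_of_ne_of_ne hmi hmj, Pi.single_apply, hmi, hmj]
  have hc : (v i - v j) ≠ 0 := sub_ne_zero.mpr hij
  have hu : (Pi.single i (1 : ZMod p) - Pi.single j 1) ∈ W := by
    have := hsmul (v i - v j)⁻¹ _ (hrep ▸ hw)
    rwa [smul_smul, inv_mul_cancel₀ hc, one_smul] at this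
  -- all e_k - e_l with k ≠ l are in W
  have hkl : ∀ k l : Fin n, k ≠ l →
      (Pi.single k (1 : ZMod p) - Pi.single l 1) ∈ W := by
    intro k l hkl
    set τ₁ := Equiv.swap k i
    have hli : τ₁ l ≠ i := by
      intro h
      exact hkl ((τ₁.injective (h.trans (Equiv.swap_apply_left k i).symm)).symm)
    set τ₂ := Equiv.swap (τ₁ l) j
    set σ := τ₁.trans τ₂
    have hσk : σ k = i := by
      simp only [σ, Equiv.trans_apply, τ₁, Equiv.swap_apply_left]
      exact Equiv.swap_apply_of_ne_of_ne (Ne.symm hli) hij'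
    have hσl : σ l = j := by
      simp only [σ, Equiv.trans_apply]
      exact Equiv.swap_apply_left _ _
    have := hW σ _ hu
    have heq : (fun m => ((Pi.single i 1 - Pi.single j 1 : Fin n → ZMod p)) (σ m))
        = Pi.single k (1 : ZMod p) - Pi.single l 1 := by
      ext m
      by_cases hmk : m = k
      · subst hmk; simp [hσk, Pi.single_apply, hij', hkl]
      · by_cases hml : m = l
        · subst hml; simp [hσl, Pi.single_apply, Ne.symm hij', Ne.symm hkl]
        · have h1 : σ m ≠ i := by rw [← hσk]; exact fun h => hmk (σ.injective h)
          have h2 : σ m ≠ j := by rw [← hσl]; exact fun h => hml (σ.injective h)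
          simp [Pi.single_apply, h1, h2, hmk, hml]
    rwa [heq] at this
  -- now the main claim
  intro x hx
  have hxrep : x = ∑ k, x k • (Pi.single k (1 : ZMod p) - Pi.single j 1) := by
    ext m
    simp only [Finset.sum_apply, Pi.smul_apply, Pi.sub_apply, smul_eq_mul,
      mul_sub, Finset.sum_sub_distrib, ← Finset.sum_mul, hx, zero_mul,
      sub_zero, Pi.single_apply]
    simp [mul_ite]
  rw [hxrep]
  apply AddSubgroup.sum_mem
  intro k _
  by_cases hk : k = j
  · subst hk; simpa using W.zero_mem
  · exact hsmul _ _ (hkl k j hk)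
end
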